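/- arXiv:1803.08658 — 3 statements merged into one kernel-verified Lean document; each statement's English description precedes it below -/
import Mathlib

section
/- For any simple loopless graph G of order n and any negative real number x, (-1)^n · P(G, x) > 0, where P(G, x) is the chromatic polynomial of G. -/
/-!
Deletion–contraction: for an edge `uv` of `G`, a proper colouring of `G - uv` either separates
`u` and `v` (a colouring of `G`) or not (a colouring of the contraction `G / uv`), so
`P(G) = P(G - uv) - P(G / uv)`. By induction on the number of vertices and then of edges,
`(-1)^n P(G - uv)(x)` and `(-1)^(n-1) P(G / uv)(x)` are positive for `x < 0`, hence so is
`(-1)^n P(G)(x)`; for the edgeless graph `P = X^n` and `(-1)^n x^n = (-x)^n > 0`.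
-/

open Polynomial

/-- `P` is the chromatic polynomial of `G`: for every natural number `k`,
`P` evaluated at `k` equals the number of proper `k`-colorings of `G`. -/
def IsChromPoly {W : Type*} (G : SimpleGraph W) (P : Polynomial ℝ) : Prop :=
  ∀ k : ℕ, P.eval (k : ℝ) = (Nat.card (G.Coloring (Fin k)) : ℝ)

namespace SimpleGraph

variable {V W α : Type*}

/-- Contraction of `uv` is `G.map (identifyWith huv)`; `SimpleGraph.map` drops the loop that the
edge `uv` itself would become. -/
def identifyWith [DecidableEq V] {u v : V} (huv : u ≠ v) (w : V) : {w : V // w ≠ v} :=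
  if h : w = v then ⟨u, huv⟩ else ⟨w, h⟩

theorem identifyWith_surjective [DecidableEq V] {u v : V} (huv : u ≠ v) :
    Function.Surjective (identifyWith huv) :=
  fun w => ⟨w, dif_neg w.2⟩

theorem identifyWith_eq_iff [DecidableEq V] {u v : V} (huv : u ≠ v) {x y : V} :
    identifyWith huv x = identifyWith huv y ↔ x = y ∨ x = u ∧ y = v ∨ x = v ∧ y = u := by
  unfold identifyWith
  split_ifs <;> simp only [Subtype.ext_iff] <;> grind

noncomputable def mapColoringEquiv (G : SimpleGraph V) {π : V → W}
    (hπ : Function.Surjective π) (hG : ∀ ⦃x y⦄, G.Adj x y → π x ≠ π y) :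
    (G.map π).Coloring α ≃ {C : G.Coloring α // ∀ x y, π x = π y → C x = C y} where
  toFun C := ⟨C.comp (.map π G fun h => hG h), fun _ _ h => congrArg C h⟩
  invFun C := Coloring.mk (fun a => C.1 (Function.surjInv hπ a))
    fun {a b} ⟨_, x, y, hxy, hx, hy⟩ => by
      rw [C.2 (Function.surjInv hπ a) x (by rw [Function.surjInv_eq hπ, hx]),
        C.2 (Function.surjInv hπ b) y (by rw [Function.surjInv_eq hπ, hy])]
      exact C.1.valid hxy
  left_inv C := by ext a; exact congrArg C (Function.surjInv_eq hπ a)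
  right_inv C := by ext x; exact C.2 _ _ (Function.surjInv_eq hπ _)

noncomputable def coloringMapIdentifyWithEquiv [DecidableEq V] (H : SimpleGraph V) {u v : V}
    (huv : u ≠ v) (hH : ¬ H.Adj u v) :
    (H.map (identifyWith huv)).Coloring α ≃ {C : H.Coloring α // C u = C v} :=
  (H.mapColoringEquiv (identifyWith_surjective huv) fun x y hxy h => by
      rcases (identifyWith_eq_iff huv).mp h with rfl | ⟨rfl, rfl⟩ | ⟨rfl, rfl⟩
      exacts [hxy.ne rfl, hH hxy, hH hxy.symm]).trans <|
    Equiv.subtypeEquivRight fun C =>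
      ⟨fun h => h u v ((identifyWith_eq_iff huv).mpr (.inr (.inl ⟨rfl, rfl⟩))),
        fun h x y hxy => by
          rcases (identifyWith_eq_iff huv).mp hxy with rfl | ⟨rfl, rfl⟩ | ⟨rfl, rfl⟩
          exacts [rfl, h, h.symm]⟩

def coloringEquivDeleteEdges (G : SimpleGraph V) {u v : V} (huv : G.Adj u v) :
    G.Coloring α ≃ {C : (G.deleteEdges {s(u, v)}).Coloring α // C u ≠ C v} where
  toFun C := ⟨C.comp (.ofLE (G.deleteEdges_le _)), C.valid huv⟩
  invFun C := Coloring.mk C.1 fun {a b} hab => by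
    by_cases he : s(a, b) = s(u, v)
    · rcases Sym2.eq_iff.mp he with ⟨rfl, rfl⟩ | ⟨rfl, rfl⟩
      exacts [C.2, C.2.symm]
    · exact C.1.valid (deleteEdges_adj.mpr ⟨hab, he⟩)
  left_inv _ := rfl
  right_inv _ := rfl

theorem card_coloring_deleteEdges [Fintype V] [DecidableEq V] [Fintype α] (G : SimpleGraph V)
    {u v : V} (huv : G.Adj u v) :
    Nat.card ((G.deleteEdges {s(u, v)}).Coloring α) = Nat.card (G.Coloring α) +
      Nat.card (((G.deleteEdges {s(u, v)}).map (identifyWith huv.ne)).Coloring α) := by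
  classical
  rw [Nat.card_congr (G.coloringEquivDeleteEdges huv),
    Nat.card_congr ((G.deleteEdges {s(u, v)}).coloringMapIdentifyWithEquiv huv.ne (by simp)),
    add_comm, ← Nat.card_sum]
  exact Nat.card_congr (Equiv.sumCompl _).symm

def coloringBotEquiv (α : Type*) : (⊥ : SimpleGraph V).Coloring α ≃ (V → α) where
  toFun C := C
  invFun f := Coloring.mk f fun h => h.elim
  left_inv _ := rfl
  right_inv _ := rfl

theorem card_edgeSet_deleteEdges_lt [Finite V] (G : SimpleGraph V) {u v : V} (huv : G.Adj u v) :
    Nat.card (G.deleteEdges {s(u, v)}).edgeSet < Nat.card G.edgeSet := by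
  rw [Nat.card_coe_set_eq, Nat.card_coe_set_eq, edgeSet_deleteEdges]
  exact Set.ncard_sdiff_singleton_lt_of_mem huv

end SimpleGraph

open SimpleGraph

theorem Fintype.card_subtype_ne_add_one {V : Type*} [Fintype V] [DecidableEq V] (v : V) :
    Fintype.card {w // w ≠ v} + 1 = Fintype.card V := by
  rw [Fintype.card_subtype_compl, Fintype.card_subtype_eq]
  exact Nat.sub_add_cancel (Fintype.card_pos_iff.mpr ⟨v⟩)

theorem IsChromPoly.unique {V : Type*} {G : SimpleGraph V} {P Q : ℝ[X]} (hP : IsChromPoly G P)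
    (hQ : IsChromPoly G Q) : P = Q :=
  eq_of_infinite_eval_eq P Q <| (Set.infinite_range_of_injective Nat.cast_injective).mono
    (by rintro _ ⟨k, rfl⟩; simp [hP k, hQ k])

theorem isChromPoly_bot (V : Type*) [Fintype V] :
    IsChromPoly (⊥ : SimpleGraph V) (X ^ Fintype.card V) := by
  intro k
  rw [Nat.card_congr (coloringBotEquiv (V := V) (Fin k)), Nat.card_fun]
  simp

theorem IsChromPoly.sub_of_deleteEdges {V : Type*} [Fintype V] [DecidableEq V]
    {G : SimpleGraph V} {u v : V} (huv : G.Adj u v) {Q R : ℝ[X]}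
    (hQ : IsChromPoly (G.deleteEdges {s(u, v)}) Q)
    (hR : IsChromPoly ((G.deleteEdges {s(u, v)}).map (identifyWith huv.ne)) R) :
    IsChromPoly G (Q - R) := by
  intro k
  rw [eval_sub, hQ k, hR k, G.card_coloring_deleteEdges huv]
  push_cast
  ring

theorem exists_isChromPoly_neg_one_pow_mul_eval_pos {V : Type*} [Fintype V]
    (G : SimpleGraph V) :
    ∃ P : ℝ[X], IsChromPoly G P ∧ ∀ x < 0, 0 < (-1 : ℝ) ^ Fintype.card V * P.eval x := by
  classical
  by_cases hG : G = ⊥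
  · subst hG
    refine ⟨X ^ Fintype.card V, isChromPoly_bot V, fun x hx => ?_⟩
    rw [eval_pow, eval_X, ← mul_pow]
    exact pow_pos (by linarith) _
  obtain ⟨u, v, huv⟩ : ∃ u v, G.Adj u v := by simpa [eq_bot_iff_forall_not_adj] using hG
  obtain ⟨Q, hQ, hQ_pos⟩ :=
    exists_isChromPoly_neg_one_pow_mul_eval_pos (G.deleteEdges {s(u, v)})
  obtain ⟨R, hR, hR_pos⟩ := exists_isChromPoly_neg_one_pow_mul_eval_pos
    ((G.deleteEdges {s(u, v)}).map (identifyWith huv.ne))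
  refine ⟨Q - R, hQ.sub_of_deleteEdges huv hR, fun x hx => ?_⟩
  have hQx := hQ_pos x hx
  rw [← Fintype.card_subtype_ne_add_one v] at hQx ⊢
  calc (0 : ℝ) < (-1) ^ (Fintype.card {w // w ≠ v} + 1) * Q.eval x +
        (-1) ^ Fintype.card {w // w ≠ v} * R.eval x := add_pos hQx (hR_pos x hx)
    _ = _ := by rw [eval_sub, pow_succ]; ring
termination_by (Nat.card V, Nat.card G.edgeSet)
decreasing_by
  · exact Prod.Lex.right _ (G.card_edgeSet_deleteEdges_lt huv)
  · exact Prod.Lex.left _ _ (Finite.card_subtype_lt (x := v) (by simp))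

theorem stmt0 {V : Type*} [Fintype V] (G : SimpleGraph V) (P : Polynomial ℝ)
    (hP : IsChromPoly G P) (x : ℝ) (hx : x < 0) :
    0 < (-1 : ℝ) ^ (Fintype.card V) * P.eval x := by
  obtain ⟨Q, hQ, hQ_pos⟩ := exists_isChromPoly_neg_one_pow_mul_eval_pos G
  exact hP.unique hQ ▸ hQ_pos x hx
end

section
/- Let G be a 2-connected simple graph of order n ≥ 3 that is neither complete nor a cycle. Then there exist two non-adjacent vertices u_1, u_2 of G such that G − {u_1, u_2} is connected. -/
/-!
Two-connectedness forces minimum degree at least 2 and connectedness, so a graph that is not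
a cycle has a vertex `w` of degree at least 3. If `w` is adjacent to every other vertex, any
non-adjacent pair works, `w` holding the rest together. Otherwise pick `z` not adjacent to `w`
and assume `G - {w, z}` is disconnected. Since `G - w` is connected, every component `C` of
`G - {w, z}` induces, together with `z`, a connected graph, which has a non-cut vertex other
than `z` (a leaf of a spanning tree). Such vertices `x`, `x'` taken in two different
components are non-adjacent, and in `G - {x, x'}` every vertex other than `w` still reaches `z`
inside its own component plus `z`, and `w` does so through one of its at least three neighbours.
-/

open Polynomial

lemma Finset.exists_mem_ne_ne {α : Type*} [DecidableEq α] {u : Finset α}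
    (hu : 2 < u.card) (a b : α) : ∃ c ∈ u, c ≠ a ∧ c ≠ b := by
  obtain ⟨c, hc, hcab⟩ := Finset.exists_mem_notMem_of_card_lt_card (s := {a, b})
    (Finset.card_le_two.trans_lt hu)
  exact ⟨c, hc, by simpa [not_or] using hcab⟩

namespace SimpleGraph

variable {V : Type*} {G : SimpleGraph V} {s t : Set V} {a b c r z : V}

def ReachableIn (G : SimpleGraph V) (s : Set V) (a b : V) : Prop :=
  ∃ p : G.Walk a b, ∀ v ∈ p.support, v ∈ s

namespace ReachableIn

lemma left_mem (h : G.ReachableIn s a b) : a ∈ s :=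
  h.choose_spec a h.choose.start_mem_support

lemma refl (ha : a ∈ s) : G.ReachableIn s a a :=
  ⟨.nil, by simpa using ha⟩

lemma symm (h : G.ReachableIn s a b) : G.ReachableIn s b a :=
  let ⟨p, hp⟩ := h
  ⟨p.reverse, by simpa using hp⟩

lemma right_mem (h : G.ReachableIn s a b) : b ∈ s :=
  h.symm.left_mem

lemma trans (hab : G.ReachableIn s a b) (hbc : G.ReachableIn s b c) : G.ReachableIn s a c :=
  let ⟨p, hp⟩ := hab
  let ⟨q, hq⟩ := hbc
  ⟨p.append q, fun v hv => (Walk.mem_support_append_iff p q).mp hv |>.elim (hp v) (hq v)⟩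

lemma mono (hst : s ⊆ t) (h : G.ReachableIn s a b) : G.ReachableIn t a b :=
  let ⟨p, hp⟩ := h
  ⟨p, fun v hv => hst (hp v hv)⟩

lemma of_adj (hab : G.Adj a b) (ha : a ∈ s) (hb : b ∈ s) : G.ReachableIn s a b :=
  ⟨hab.toWalk, by simp [ha, hb]⟩

end ReachableIn

lemma Reachable.reachableIn_of_hom {W : Type*} {H : SimpleGraph W} (f : H →g G)
    (hf : ∀ x, f x ∈ s) {x y : W} (h : H.Reachable x y) : G.ReachableIn s (f x) (f y) :=
  let ⟨p⟩ := h
  ⟨p.map f, by simp [Walk.support_map, hf]⟩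

lemma reachableIn_iff_reachable_induce (ha : a ∈ s) (hb : b ∈ s) :
    G.ReachableIn s a b ↔ (G.induce s).Reachable ⟨a, ha⟩ ⟨b, hb⟩ :=
  ⟨fun ⟨p, hp⟩ => ⟨p.induce s hp⟩,
    fun h => h.reachableIn_of_hom (Embedding.induce s).toHom fun x => x.2⟩

lemma connected_induce_of_forall_reachableIn (hr : r ∈ s)
    (h : ∀ v ∈ s, G.ReachableIn s v r) : (G.induce s).Connected :=
  (connected_iff_exists_forall_reachable _).mpr
    ⟨⟨r, hr⟩, fun v => ((reachableIn_iff_reachable_induce v.2 hr).mp (h v v.2)).symm⟩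

lemma connected_induce_of_forall_adj (hr : r ∈ s) (h : ∀ v ∈ s, v ≠ r → G.Adj r v) :
    (G.induce s).Connected :=
  connected_induce_of_forall_reachableIn hr fun v hv => by
    obtain rfl | hvr := eq_or_ne v r
    exacts [.refl hr, .of_adj (h v hv hvr).symm hv hr]

def componentIn (G : SimpleGraph V) (s : Set V) (c : V) : Set V :=
  {d | G.ReachableIn s c d}

lemma ReachableIn.insert_componentIn (h : G.ReachableIn (insert z s) a z)
    (ha : a ∈ insert z (G.componentIn s c)) :
    G.ReachableIn (insert z (G.componentIn s c)) a z := by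
  obtain ⟨p, hp⟩ := h
  induction p with
  | nil => exact .refl ha
  | @cons a b _ hab q ih =>
    obtain rfl | ha' := ha
    · exact .refl (Set.mem_insert _ _)
    obtain rfl | hbs := hp b (by simp)
    · exact .of_adj hab (.inr ha') (Set.mem_insert _ _)
    have hb : b ∈ G.componentIn s c := ha'.trans (.of_adj hab ha'.right_mem hbs)
    exact (ReachableIn.of_adj hab (.inr ha') (.inr hb)).trans
      (ih (.inr hb) fun v hv => hp v (by simp [hv]))

lemma connected_induce_insert_componentIn (hz : ∀ d ∈ s, G.ReachableIn (insert z s) d z) :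
    (G.induce (insert z (G.componentIn s c))).Connected := by
  refine connected_induce_of_forall_reachableIn (Set.mem_insert _ _) fun d hd => ?_
  obtain rfl | hd := hd
  · exact .refl (Set.mem_insert _ _)
  refine ((hz d hd.right_mem).insert_componentIn (c := d) (.inr (.refl hd.right_mem))).mono ?_
  exact Set.insert_subset_insert fun e he => hd.trans he

lemma Connected.exists_ne_connected_induce_compl_singleton [Finite V] [Nontrivial V]
    (hG : G.Connected) (r : V) : ∃ x ≠ r, (G.induce {x}ᶜ).Connected := by
  classical
  have := Fintype.ofFinite V
  obtain ⟨T, hTG, hT⟩ := hG.exists_isTree_le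
  obtain ⟨u, v, huv, hu, hv⟩ := hT.exists_ne_and_degree_eq_one
  have leaf_removable {x : V} (hx : T.degree x = 1) : (G.induce {x}ᶜ).Connected :=
    (hT.connected.induce_compl_singleton_of_degree_eq_one hx).mono fun _ _ h => hTG h
  obtain rfl | hur := eq_or_ne u r
  exacts [⟨v, huv.symm, leaf_removable hv⟩, ⟨u, hur, leaf_removable hu⟩]

lemma exists_ne_forall_reachableIn_diff_singleton [Finite V] (hs : (G.induce s).Connected)
    (hr : r ∈ s) (hc : c ∈ s) (hcr : c ≠ r) :
    ∃ x ∈ s, x ≠ r ∧ ∀ y ∈ s \ {x}, G.ReachableIn (s \ {x}) y r := by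
  have : Nontrivial s := ⟨⟨⟨c, hc⟩, ⟨r, hr⟩, by simpa using hcr⟩⟩
  obtain ⟨x, hxr, hx⟩ := hs.exists_ne_connected_induce_compl_singleton ⟨r, hr⟩
  refine ⟨x, x.2, fun h => hxr (Subtype.ext h), fun y hy => ?_⟩
  let f : (G.induce s).induce {x}ᶜ →g G :=
    (Embedding.induce s).toHom.comp (Embedding.induce {x}ᶜ).toHom
  have hf (u : ({x}ᶜ : Set s)) : f u ∈ s \ {x.1} :=
    ⟨u.1.2, fun h => u.2 (Subtype.ext h)⟩
  exact hx.preconnected ⟨⟨y, hy.1⟩, fun h => hy.2 (congrArg Subtype.val h)⟩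
    ⟨⟨r, hr⟩, hxr.symm⟩ |>.reachableIn_of_hom f hf

lemma exists_adj_ne_ne_of_three_le_degree [Fintype V] [DecidableRel G.Adj] {w : V}
    (hw : 3 ≤ G.degree w) (a b : V) : ∃ y, G.Adj w y ∧ y ≠ a ∧ y ≠ b := by
  classical
  obtain ⟨y, hy, hyab⟩ := (G.neighborFinset w).exists_mem_ne_ne hw a b
  exact ⟨y, (G.mem_neighborFinset w y).mp hy, hyab⟩

lemma exists_adj_ne_of_connected_induce_ne [Fintype V] (hn : 3 ≤ Fintype.card V) {v y : V}
    (hy : (G.induce {w | w ≠ y}).Connected) (hvy : v ≠ y) : ∃ c, G.Adj v c ∧ c ≠ y := by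
  classical
  obtain ⟨u, -, huv, huy⟩ := Finset.univ.exists_mem_ne_ne hn v y
  have : Nontrivial {w | w ≠ y} :=
    ⟨⟨⟨v, hvy⟩, ⟨u, huy⟩, fun h => huv (congrArg Subtype.val h).symm⟩⟩
  have hv : (⟨v, hvy⟩ : {w | w ≠ y}) ∈ (G.induce {w | w ≠ y}).support := by
    simp [hy.preconnected.support_eq_univ]
  obtain ⟨c, hc⟩ := (mem_support _).mp hv
  exact ⟨c, hc, c.2⟩

lemma two_le_degree_of_forall_connected_induce_ne [Fintype V] [DecidableRel G.Adj]
    (hn : 3 ≤ Fintype.card V) (h2 : ∀ y, (G.induce {w | w ≠ y}).Connected) (v : V) :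
    2 ≤ G.degree v := by
  obtain ⟨y, hyv⟩ := Fintype.exists_ne_of_one_lt_card (by omega) v
  obtain ⟨c₁, hc₁, -⟩ := exists_adj_ne_of_connected_induce_ne hn (h2 y) hyv.symm
  obtain ⟨c₂, hc₂, hc₂₁⟩ := exists_adj_ne_of_connected_induce_ne hn (h2 c₁) hc₁.ne
  exact Finset.one_lt_card.mpr ⟨c₁, by simpa using hc₁, c₂, by simpa using hc₂, hc₂₁.symm⟩

lemma connected_of_connected_induce_ne_of_adj {v c : V}
    (hv : (G.induce {w | w ≠ v}).Connected) (hvc : G.Adj v c) : G.Connected := by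
  refine (connected_iff_exists_forall_reachable _).mpr ⟨c, fun a => ?_⟩
  obtain rfl | hav := eq_or_ne a v
  · exact hvc.reachable.symm
  · exact (hv.preconnected ⟨c, hvc.ne'⟩ ⟨a, hav⟩).map (Embedding.induce _).toHom

lemma exists_forall_reachableIn_avoiding_of_not_reachableIn [Finite V] {p q : V}
    (hz : ∀ d ∈ s, G.ReachableIn (insert z s) d z) (hp : p ∈ s) (hq : q ∈ s) (hpz : p ≠ z)
    (hqz : q ≠ z) (hpq : ¬ G.ReachableIn s p q) :
    ∃ x ∈ G.componentIn s p, ∃ x' ∈ G.componentIn s q, ∀ v ∈ s, v ≠ x → v ≠ x' →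
      G.ReachableIn {u | u ≠ x ∧ u ≠ x'} v z := by
  obtain ⟨x, hxK, hxz, hx⟩ := exists_ne_forall_reachableIn_diff_singleton
    (connected_induce_insert_componentIn hz) (Set.mem_insert _ _) (.inr (.refl hp)) hpz
  obtain ⟨x', hx'K, hx'z, hx'⟩ := exists_ne_forall_reachableIn_diff_singleton
    (connected_induce_insert_componentIn hz) (Set.mem_insert _ _) (.inr (.refl hq)) hqz
  have hxp : G.ReachableIn s p x := hxK.resolve_left hxz
  have hx'q : G.ReachableIn s q x' := hx'K.resolve_left hx'z
  have avoid {A : Set V} {v : V} (hxA : x ∉ A) (hx'A : x' ∉ A) (h : G.ReachableIn A v z) :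
      G.ReachableIn {u | u ≠ x ∧ u ≠ x'} v z :=
    h.mono fun u hu => ⟨fun h => hxA (h ▸ hu), fun h => hx'A (h ▸ hu)⟩
  refine ⟨x, hxp, x', hx'q, fun v hv hvx hvx' => ?_⟩
  by_cases hpv : G.ReachableIn s p v
  · refine avoid (fun h => h.2 rfl) (fun h => ?_) (hx v ⟨.inr hpv, hvx⟩)
    obtain h | h := h.1
    exacts [hx'z h, hpq (h.trans hx'q.symm)]
  by_cases hqv : G.ReachableIn s q v
  · refine avoid (fun h => ?_) (fun h => h.2 rfl) (hx' v ⟨.inr hqv, hvx'⟩)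
    obtain h | h := h.1
    exacts [hxz h, hpq (hxp.trans h.symm)]
  refine avoid ?_ ?_ ((hz v hv).insert_componentIn (.inr (.refl hv)))
  · rintro (h | h)
    exacts [hxz h, hpv (hxp.trans h.symm)]
  · rintro (h | h)
    exacts [hx'z h, hqv (hx'q.trans h.symm)]

lemma exists_not_adj_connected_induce_of_not_connected_induce [Fintype V] [DecidableRel G.Adj]
    {w z : V} (hw : (G.induce {v | v ≠ w}).Connected) (hwz : ¬ G.Adj w z)
    (hdeg : 3 ≤ G.degree w) (hdisc : ¬ (G.induce {v | v ≠ w ∧ v ≠ z}).Connected) :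
    ∃ x x', x ≠ x' ∧ ¬ G.Adj x x' ∧ (G.induce {v | v ≠ x ∧ v ≠ x'}).Connected := by
  have hzw : z ≠ w := by
    rintro rfl
    rw [show {v | v ≠ z ∧ v ≠ z} = {v | v ≠ z} by simp] at hdisc
    exact hdisc hw
  set s : Set V := {v | v ≠ w ∧ v ≠ z}
  have hz (d) (hd : d ∈ s) : G.ReachableIn (insert z s) d z :=
    ((reachableIn_iff_reachable_induce hd.1 hzw).mpr (hw.preconnected _ _)).mono
      fun v hv => or_iff_not_imp_left.mpr fun hvz => ⟨hv, hvz⟩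
  have hadj_mem {y : V} (hy : G.Adj w y) : y ∈ s := ⟨hy.ne', fun h => hwz (h ▸ hy)⟩
  obtain ⟨p, hp, q, hq, hpq⟩ : ∃ p ∈ s, ∃ q ∈ s, ¬ G.ReachableIn s p q := by
    by_contra! h
    obtain ⟨y, hy⟩ := (G.degree_pos_iff_exists_adj w).mp (by omega)
    exact hdisc <| connected_induce_of_forall_reachableIn (hadj_mem hy) fun v hv =>
      h v hv y (hadj_mem hy)
  obtain ⟨x, hxp, x', hx'q, hreach⟩ :=
    exists_forall_reachableIn_avoiding_of_not_reachableIn hz hp hq hp.2 hq.2 hpq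
  refine ⟨x, x', fun h => hpq (hxp.trans (h ▸ hx'q.symm)), fun h => ?_, ?_⟩
  · exact hpq (hxp.trans ((ReachableIn.of_adj h hxp.right_mem hx'q.right_mem).trans hx'q.symm))
  refine connected_induce_of_forall_reachableIn (r := z)
    ⟨hxp.right_mem.2.symm, hx'q.right_mem.2.symm⟩ fun v hv => ?_
  obtain rfl | hvz := eq_or_ne v z
  · exact .refl hv
  obtain rfl | hvw := eq_or_ne v w
  · obtain ⟨y, hy, hyx, hyx'⟩ := exists_adj_ne_ne_of_three_le_degree hdeg x x'
    exact (ReachableIn.of_adj hy hv ⟨hyx, hyx'⟩).trans (hreach y (hadj_mem hy) hyx hyx')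
  · exact hreach v ⟨hvw, hvz⟩ hv.1 hv.2

end SimpleGraph

theorem stmt13_general {V : Type*} [Fintype V] (G : SimpleGraph V)
    [DecidableRel G.Adj]
    (hn : 3 ≤ Fintype.card V)
    (h2conn : ∀ v : V, (G.induce {w | w ≠ v}).Connected)
    (hnc : G ≠ ⊤)
    (hncyc : ¬ (G.Connected ∧ ∀ v, G.degree v = 2)) :
    ∃ u₁ u₂ : V, u₁ ≠ u₂ ∧ ¬ G.Adj u₁ u₂ ∧
      (G.induce {w | w ≠ u₁ ∧ w ≠ u₂}).Connected := by
  have hdeg := SimpleGraph.two_le_degree_of_forall_connected_induce_ne hn h2conn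
  obtain ⟨v⟩ : Nonempty V := Fintype.card_pos_iff.mp (by omega)
  obtain ⟨c, hvc⟩ := (G.degree_pos_iff_exists_adj v).mp (by have := hdeg v; omega)
  obtain ⟨w, hw⟩ : ∃ w, 3 ≤ G.degree w := by
    by_contra! h
    exact hncyc ⟨SimpleGraph.connected_of_connected_induce_ne_of_adj (h2conn v) hvc,
      fun v => by have := h v; have := hdeg v; omega⟩
  by_cases huniv : ∀ v, v ≠ w → G.Adj w v
  · obtain ⟨a, b, hab, hnadj⟩ := SimpleGraph.ne_top_iff_exists_not_adj.mp hnc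
    have haw : a ≠ w := by
      rintro rfl
      exact hnadj (huniv b hab.symm)
    have hbw : b ≠ w := by
      rintro rfl
      exact hnadj (huniv a hab).symm
    exact ⟨a, b, hab, hnadj,
      SimpleGraph.connected_induce_of_forall_adj ⟨haw.symm, hbw.symm⟩ fun v _ hvw => huniv v hvw⟩
  push Not at huniv
  obtain ⟨z, hzw, hwz⟩ := huniv
  by_cases hdisc : (G.induce {v | v ≠ w ∧ v ≠ z}).Connected
  · exact ⟨w, z, hzw.symm, hwz, hdisc⟩
  · exact SimpleGraph.exists_not_adj_connected_induce_of_not_connected_induce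
      (h2conn w) hwz hw hdisc

theorem stmt13 {V : Type*} [Fintype V] [DecidableEq V] (G : SimpleGraph V)
    [DecidableRel G.Adj]
    (hn : 3 ≤ Fintype.card V)
    (h2conn : ∀ v : V, (G.induce {w | w ≠ v}).Connected)
    (hnc : G ≠ ⊤)
    (hncyc : ¬ (G.Connected ∧ ∀ v, G.degree v = 2)) :
    ∃ u₁ u₂ : V, u₁ ≠ u₂ ∧ ¬ G.Adj u₁ u₂ ∧
      (G.induce {w | w ≠ u₁ ∧ w ≠ u₂}).Connected :=
  stmt13_general G hn h2conn hnc hncyc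
end

section
/- Let G be a simple graph of order n ≥ 3 with c components, where 2 ≤ c ≤ n − 1. Then for every integer i with c ≤ i ≤ n − 1, there exists a partition V_1, V_2, …, V_i of V(G) such that G[V_j] is connected for all j = 2, …, i, and G[V_1] has exactly two components, one of which is a single vertex. -/
/-!
The connected components partition `V` into `c` connected parts. Every finite connected graph
has a vertex whose removal leaves it connected (a leaf of a spanning tree), so deleting such a
vertex `v` from its component leaves a partition of `V \ {v}` into at most `c` connected parts,
and splitting off such vertices one at a time raises the number of parts by one at each step,
up to any `i ≤ n - 1`. Adding `v` to a part lying in another component yields the part `V₁`,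
whose two components are `{v}` and that part.
-/

open Polynomial

open Finset

namespace Finpartition

variable {α : Type*} [DecidableEq α] {s : Finset α} (P : Finpartition s) (b : Finset α)

theorem card_avoid_le : #(P.avoid b).parts ≤ #P.parts :=
  card_le_card_of_surjOn (· \ b) fun c hc ↦ by
    obtain ⟨d, hd, -, rfl⟩ := P.mem_avoid.1 hc
    exact ⟨d, hd, rfl⟩

theorem card_avoid_of_forall_not_subset (h : ∀ d ∈ P.parts, ¬d ⊆ b) :
    #(P.avoid b).parts = #P.parts := by
  refine (card_nbij (· \ b) (fun d hd ↦ P.mem_avoid.2 ⟨d, hd, h d hd, rfl⟩) ?_ ?_).symm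
  · intro d hd d' hd' hdd'
    obtain ⟨x, hx⟩ := sdiff_nonempty.2 (h d hd)
    have hx' : x ∈ d' \ b := by simpa only [← hdd'] using hx
    exact P.eq_of_mem_parts hd hd' (mem_sdiff.1 hx).1 (mem_sdiff.1 hx').1
  · intro c hc
    obtain ⟨d, hd, -, rfl⟩ := P.mem_avoid.1 hc
    exact ⟨d, hd, rfl⟩

theorem exists_fin_family_insert [Fintype α] {v : α} (R : Finpartition (univ \ {v}))
    {q : Finset α} (hq : q ∈ R.parts) (j₀ : Fin #R.parts) :
    ∃ f : Fin #R.parts → Finset α,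
      f j₀ = insert v q ∧ (∀ j ≠ j₀, f j ∈ R.parts) ∧ (∀ j, (f j).Nonempty) ∧
      (∀ j k, j ≠ k → Disjoint (f j) (f k)) ∧ univ.biUnion f = univ := by
  let e₀ := R.parts.equivFin.symm
  let e := (Equiv.swap j₀ (e₀.symm ⟨q, hq⟩)).trans e₀
  have he : (e j₀ : Finset α) = q := by simp [e]
  have hvR : ∀ j, v ∉ (e j : Finset α) := fun j hv ↦ by simpa using R.le (e j).2 hv
  have hdisj : ∀ j k, j ≠ k → Disjoint (e j : Finset α) (e k) := fun j k hjk ↦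
    R.disjoint (e j).2 (e k).2 fun h ↦ hjk (e.injective (Subtype.ext h))
  set f := Function.update (fun j ↦ (e j : Finset α)) j₀ (insert v q)
  have hf : ∀ j ≠ j₀, f j = e j := fun j hj ↦ Function.update_of_ne hj _ _
  have hf₀ : f j₀ = insert v q := Function.update_self ..
  refine ⟨f, hf₀, fun j hj ↦ hf j hj ▸ (e j).2, fun j ↦ ?_, fun j k hjk ↦ ?_, ?_⟩
  · by_cases hj : j = j₀
    · exact hj ▸ hf₀ ▸ insert_nonempty v q
    · exact hf j hj ▸ R.nonempty_of_mem_parts (e j).2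
  · by_cases hj : j = j₀ <;> by_cases hk : k = j₀
    · exact absurd (hj.trans hk.symm) hjk
    · rw [hj, hf₀, hf k hk, disjoint_insert_left, ← he]
      exact ⟨hvR k, hdisj j₀ k (hj ▸ hjk)⟩
    · rw [hk, hf₀, hf j hj, disjoint_insert_right, ← he]
      exact ⟨hvR j, hdisj j j₀ (hk ▸ hjk)⟩
    · rw [hf j hj, hf k hk]
      exact hdisj j k hjk
  · refine eq_univ_of_forall fun x ↦ mem_biUnion.2 ?_
    by_cases hx : x = v
    · exact ⟨j₀, mem_univ _, hf₀ ▸ hx ▸ mem_insert_self x q⟩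
    obtain ⟨t, ht, hxt⟩ := R.exists_mem (by simpa using hx : x ∈ univ \ {v})
    refine ⟨e.symm ⟨t, ht⟩, mem_univ _, ?_⟩
    by_cases hj : e.symm ⟨t, ht⟩ = j₀
    · rw [hj, hf₀, ← he, ← hj, Equiv.apply_symm_apply]
      exact mem_insert_of_mem hxt
    · rw [hf _ hj, Equiv.apply_symm_apply]
      exact hxt

end Finpartition

namespace SimpleGraph

variable {V : Type*} (G : SimpleGraph V)

def IsConnectedFinpartition [DecidableEq V] {s : Finset V} (P : Finpartition s) : Prop :=
  ∀ p ∈ P.parts, (G.induce (p : Set V)).Connected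

variable {G}

theorem Reachable.of_induce {s : Set V} {u v : s} (h : (G.induce s).Reachable u v) :
    G.Reachable u v :=
  h.map (Embedding.induce s).toHom

theorem exists_mem_preconnected_induce_erase [DecidableEq V] {s : Finset V}
    (hs : (G.induce (s : Set V)).Connected) :
    ∃ v ∈ s, (G.induce (s.erase v : Set V)).Preconnected := by
  obtain ⟨v, hv⟩ := hs.exists_preconnected_induce_compl_singleton_of_finite
  let f : (G.induce (s : Set V)).induce {v}ᶜ →g G.induce (s.erase v : Set V) :=
    { toFun := fun w ↦ ⟨w.1.1, mem_erase.2 ⟨fun h ↦ w.2 (Subtype.ext h), w.1.2⟩⟩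
      map_rel' := id }
  refine ⟨v, v.2, hv.map f fun w ↦ ?_⟩
  have hw := mem_erase.1 w.2
  exact ⟨⟨⟨w, hw.2⟩, fun h ↦ hw.1 (congrArg Subtype.val h)⟩, rfl⟩

namespace IsConnectedFinpartition

variable [DecidableEq V] {s : Finset V} {P : Finpartition s}

theorem avoid (hP : G.IsConnectedFinpartition P) {v : V}
    (hv : ∀ p ∈ P.parts, v ∈ p → (G.induce (p.erase v : Set V)).Preconnected) :
    G.IsConnectedFinpartition (P.avoid {v}) := by
  intro c hc
  obtain ⟨d, hd, hdv, rfl⟩ := P.mem_avoid.1 hc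
  have hne := sdiff_nonempty.2 hdv
  rw [sdiff_singleton_eq_erase] at hne ⊢
  by_cases hvd : v ∈ d
  · exact (connected_iff _).2 ⟨hv d hd hvd, hne.coe_sort⟩
  · rw [erase_eq_of_notMem hvd]
    exact hP d hd

theorem exists_mem_avoid (hP : G.IsConnectedFinpartition P) {p : Finset V} (hp : p ∈ P.parts) :
    ∃ v ∈ p, G.IsConnectedFinpartition (P.avoid {v}) := by
  obtain ⟨v, hvp, hv⟩ := exists_mem_preconnected_induce_erase (hP p hp)
  exact ⟨v, hvp, hP.avoid fun q hq hvq ↦ P.eq_of_mem_parts hp hq hvp hvq ▸ hv⟩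

theorem exists_card_eq_succ (hP : G.IsConnectedFinpartition P) (hlt : #P.parts < #s) :
    ∃ Q : Finpartition s, G.IsConnectedFinpartition Q ∧ #Q.parts = #P.parts + 1 := by
  obtain ⟨p, hp, hp2⟩ : ∃ p ∈ P.parts, 1 < #p := by
    by_contra! h
    have := P.sum_card_parts ▸ sum_le_card_nsmul P.parts card 1 h
    rw [smul_eq_mul, mul_one] at this
    omega
  obtain ⟨v, hvp, hvP⟩ := hP.exists_mem_avoid hp
  have hnot : ∀ q ∈ P.parts, ¬q ⊆ {v} := fun q hq hqv ↦ by
    obtain rfl := (subset_singleton_iff.1 hqv).resolve_left (P.ne_empty hq)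
    rw [← P.eq_of_mem_parts hq hp (mem_singleton_self v) hvp, card_singleton] at hp2
    exact hp2.false
  refine ⟨(P.avoid {v}).extend (b := {v}) (singleton_ne_empty v) sdiff_disjoint
    (sdiff_union_of_subset (singleton_subset_iff.2 (P.le hp hvp))), ?_, ?_⟩
  · intro q hq
    rcases mem_insert.1 hq with rfl | hq
    · rw [coe_singleton, induce_singleton_eq_top]
      exact connected_top
    · exact hvP q hq
  · rw [Finpartition.card_extend, P.card_avoid_of_forall_not_subset _ hnot]

theorem exists_card_eq (hP : G.IsConnectedFinpartition P) {m : ℕ} (hPm : #P.parts ≤ m)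
    (hms : m ≤ #s) : ∃ Q : Finpartition s, G.IsConnectedFinpartition Q ∧ #Q.parts = m := by
  induction m, hPm using Nat.le_induction with
  | base => exact ⟨P, hP, rfl⟩
  | succ m _ ih =>
    obtain ⟨Q, hQ, rfl⟩ := ih (by omega)
    exact hQ.exists_card_eq_succ hms

end IsConnectedFinpartition

theorem exists_isConnectedFinpartition_univ_card_le [Fintype V] [DecidableEq V] :
    ∃ P : Finpartition (univ : Finset V), G.IsConnectedFinpartition P ∧
      #P.parts ≤ Nat.card G.ConnectedComponent := by
  classical
  let P := Finpartition.ofSetoid G.reachableSetoid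
  have hcoe : ∀ v, (P.part v : Set V) = (G.connectedComponentMk v).supp := fun v ↦ by
    ext w
    rw [mem_coe, Finpartition.mem_part_ofSetoid_iff_rel, ConnectedComponent.mem_supp_iff,
      ConnectedComponent.eq]
    exact reachable_comm
  refine ⟨P, fun p hp ↦ ?_, ?_⟩
  · obtain ⟨v, hv⟩ := P.nonempty_of_mem_parts hp
    rw [← P.part_eq_of_mem hp hv, hcoe]
    exact (G.connectedComponentMk v).connected_toSimpleGraph
  · rw [Nat.card_eq_fintype_card, ← card_univ]
    refine card_le_card_of_surjOn (fun C ↦ P.part C.out) fun p hp ↦ ?_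
    obtain ⟨v, hv⟩ := P.nonempty_of_mem_parts hp
    refine ⟨G.connectedComponentMk v, mem_univ _, P.part_eq_of_mem hp ?_⟩
    rw [← P.part_eq_of_mem hp hv, ← mem_coe, hcoe]
    exact (G.connectedComponentMk v).out_eq

theorem exists_isConnectedFinpartition_univ_sdiff_singleton [Fintype V] [DecidableEq V] {i : ℕ}
    (h2 : 2 ≤ Nat.card G.ConnectedComponent) (hci : Nat.card G.ConnectedComponent ≤ i)
    (hin : i < Fintype.card V) :
    ∃ v, ∃ R : Finpartition (univ \ {v}), G.IsConnectedFinpartition R ∧ #R.parts = i ∧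
      ∃ q ∈ R.parts, ∀ w ∈ q, ¬G.Adj v w := by
  obtain ⟨P, hP, hPc⟩ := G.exists_isConnectedFinpartition_univ_card_le
  have : Nonempty V := Fintype.card_pos_iff.1 (by omega)
  obtain ⟨p, hp⟩ := P.parts_nonempty univ_nonempty.ne_empty
  obtain ⟨v, -, hPv⟩ := hP.exists_mem_avoid hp
  obtain ⟨a, hva⟩ : ∃ a, ¬G.Reachable v a := by
    have : Nontrivial G.ConnectedComponent := Finite.one_lt_card_iff_nontrivial.1 h2
    obtain ⟨C, hC⟩ := exists_ne (G.connectedComponentMk v)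
    obtain ⟨a, rfl⟩ := C.exists_rep
    exact ⟨a, fun h ↦ hC (ConnectedComponent.eq.2 h).symm⟩
  obtain ⟨R, hR, hRi⟩ := hPv.exists_card_eq ((P.card_avoid_le _).trans (hPc.trans hci))
    (by rw [sdiff_singleton_eq_erase, card_erase_of_mem (mem_univ v), card_univ]; omega)
  have ha : a ∈ univ \ {v} := by
    rw [mem_sdiff, mem_singleton]
    exact ⟨mem_univ a, fun h ↦ hva (h ▸ Reachable.refl a)⟩
  have hRa := hR _ (R.part_mem.2 ha)
  refine ⟨v, R, hR, hRi, R.part a, R.part_mem.2 ha, fun w hw hvw ↦ hva ?_⟩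
  exact hvw.reachable.trans (hRa.preconnected ⟨w, hw⟩ ⟨a, R.mem_part ha⟩).of_induce

end SimpleGraph

theorem stmt15 {V : Type*} [Fintype V] [DecidableEq V] (G : SimpleGraph V)
    (c : ℕ) (hc : c = Nat.card G.ConnectedComponent)
    (h2c : 2 ≤ c)
    (i : ℕ) (hci : c ≤ i) (hin : i ≤ Fintype.card V - 1) :
    ∃ parts : Fin i → Finset V,
      (∀ j, (parts j).Nonempty) ∧
      (∀ j k, j ≠ k → Disjoint (parts j) (parts k)) ∧
      Finset.univ.biUnion parts = Finset.univ ∧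
      (∀ j : Fin i, j ≠ ⟨0, by omega⟩ → (G.induce ((parts j : Finset V) : Set V)).Connected) ∧
      (∃ v ∈ parts ⟨0, by omega⟩,
        (∀ w ∈ parts ⟨0, by omega⟩, w ≠ v → ¬ G.Adj v w) ∧
        ((parts ⟨0, by omega⟩).erase v).Nonempty ∧
        (G.induce (((parts ⟨0, by omega⟩).erase v : Finset V) : Set V)).Connected) := by
  subst hc
  obtain ⟨v, R, hR, rfl, q, hq, hvq⟩ :=
    G.exists_isConnectedFinpartition_univ_sdiff_singleton h2c hci (by omega)
  obtain ⟨f, hf₀, hfR, hne, hdisj, hcover⟩ := R.exists_fin_family_insert hq ⟨0, by omega⟩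
  have hq' : (insert v q).erase v = q := erase_insert fun h ↦ by simpa using R.le hq h
  refine ⟨f, hne, hdisj, hcover, fun j hj ↦ hR _ (hfR j hj), v, ?_, ?_, ?_, ?_⟩
  · exact hf₀ ▸ mem_insert_self v q
  · intro w hw hwv
    exact hvq w (mem_of_mem_insert_of_ne (hf₀ ▸ hw) hwv)
  · rw [hf₀, hq']
    exact R.nonempty_of_mem_parts hq
  · rw [hf₀, hq']
    exact hR q hq
end
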